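/- arXiv:1912.07859 — 2 statements merged into one kernel-verified Lean document; each statement's English description precedes it below -/
import Mathlib

section
/- A subset C ⊆ V is a Φ_c-valid control set if and only if there exists a finite sequence of configurations y^0, y^1, …, y^T such that y^0 = 1_C, y^T is the all-ones vector, y^k_j = 1 for every j ∈ C and every k, each consecutive pair differs in exactly one coordinate i_k ∈ V∖C (i.e., y^{k+1} = y^k ± δ_{i_k}), and Φ_c(y^0) ≤ Φ_c(y^1) ≤ … ≤ Φ_c(y^T). In other words, the existence of a potential-nondecreasing single-flip path from 1_C to the all-ones configuration keeping C at 1 is equivalent to the existence of a strictly increasing (monotone-crusade) such path. -/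
open Finset

variable {V : Type*}

/-- Agreement of a configuration on an (unordered) edge. -/
def agreeFun (x : V → Bool) : Sym2 V → Bool :=
  Sym2.lift ⟨fun a b => x a == x b, fun a b => by show (x a == x b) = (x b == x a); cases x a <;> cases x b <;> rfl⟩

/-- The potential of the majority game: number of edges whose endpoints agree. -/
def Phi [Fintype V] [DecidableEq V] (G : SimpleGraph V) [DecidableRel G.Adj]
    (x : V → Bool) : ℕ :=
  (G.edgeFinset.filter (fun e => agreeFun x e = true)).card

/-- Number of neighbors of `i` playing action `a` in configuration `x`. -/
def nCount [Fintype V] (G : SimpleGraph V) [DecidableRel G.Adj]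
    (x : V → Bool) (i : V) (a : Bool) : ℕ :=
  ((G.neighborFinset i).filter (fun j => x j = a)).card

/-- Majority-game utility: number of neighbors agreeing with `i`. -/
def lamC [Fintype V] (G : SimpleGraph V) [DecidableRel G.Adj]
    (x : V → Bool) (i : V) : ℕ :=
  ((G.neighborFinset i).filter (fun j => x j = x i)).card

/-- Minority-game utility: number of neighbors disagreeing with `i`. -/
def lamA [Fintype V] (G : SimpleGraph V) [DecidableRel G.Adj]
    (x : V → Bool) (i : V) : ℕ :=
  ((G.neighborFinset i).filter (fun j => x j ≠ x i)).card

/-- `x` is a Nash equilibrium of the minority game. -/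
def MinorityNE [Fintype V] [DecidableEq V] (G : SimpleGraph V) [DecidableRel G.Adj]
    (x : V → Bool) : Prop :=
  ∀ (i : V) (a : Bool), lamA G (Function.update x i a) i ≤ lamA G x i

/-- A monotone crusade from `C`: starts at the indicator of `C`, ends at all-ones,
and at each step one coordinate outside `C` is flipped from `0` to `1`. -/
def IsCrusade [DecidableEq V] (C : Finset V) (m : ℕ) (xs : ℕ → V → Bool) : Prop :=
  xs 0 = (fun v => decide (v ∈ C)) ∧ xs m = (fun _ => true) ∧
    ∀ k < m, ∃ i, i ∉ C ∧ xs k i = false ∧ xs (k + 1) = Function.update (xs k) i true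

/-- `C` is a `Φ_c`-valid control set: there is a `Φ_c`-adapted monotone crusade from `C`. -/
def ValidControlSet [Fintype V] [DecidableEq V] (G : SimpleGraph V) [DecidableRel G.Adj]
    (C : Finset V) : Prop :=
  ∃ m xs, IsCrusade C m xs ∧ ∀ k < m, Phi G (xs k) ≤ Phi G (xs (k + 1))

/-- `x ∈ Z`: reachable from the all-ones configuration by allowed down-flips. -/
def InZ [Fintype V] [DecidableEq V] (G : SimpleGraph V) [DecidableRel G.Adj]
    (x : V → Bool) : Prop :=
  ∃ m, ∃ ys : ℕ → V → Bool, ys 0 = (fun _ => true) ∧ ys m = x ∧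
    ∀ k < m, ∃ i, ys k i = true ∧ nCount G (ys k) i false ≤ nCount G (ys k) i true ∧
      ys (k + 1) = Function.update (ys k) i false

/-- `‖x‖₁`: number of coordinates equal to `1`. -/
def norm1 [Fintype V] (x : V → Bool) : ℕ :=
  (Finset.univ.filter (fun v => x v = true)).card


set_option linter.unusedSectionVars false

section Aux
variable [Fintype V] [DecidableEq V] (G : SimpleGraph V) [DecidableRel G.Adj]


lemma agree_mk (x : V → Bool) (u v : V) : agreeFun x s(u,v) = (x u == x v) := rfl

lemma agree_update_notMem (x : V → Bool) (i : V) (a : Bool) (e : Sym2 V) (he : i ∉ e) :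
    agreeFun (Function.update x i a) e = agreeFun x e := by
  induction e using Sym2.ind with
  | _ u v =>
    simp only [Sym2.mem_iff, not_or] at he
    rw [agree_mk, agree_mk, Function.update_of_ne (Ne.symm he.1), Function.update_of_ne (Ne.symm he.2)]

lemma card_agree_incident (x : V → Bool) (i : V) (a : Bool) (ha : x i = a) :
    (G.edgeFinset.filter (fun e => agreeFun x e = true ∧ i ∈ e)).card = nCount G x i a := by
  rw [nCount]
  symm
  apply Finset.card_bij (fun j _ => s(i, j))
  · intro j hj
    simp only [mem_filter, SimpleGraph.mem_neighborFinset] at hj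
    simp only [mem_filter, SimpleGraph.mem_edgeFinset, SimpleGraph.mem_edgeSet]
    refine ⟨hj.1, ?_, by simp⟩
    rw [agree_mk, ha, hj.2]
    simp
  · intro j1 h1 j2 h2 h
    rw [Sym2.congr_right] at h; exact h
  · intro e he
    simp only [mem_filter, SimpleGraph.mem_edgeFinset, SimpleGraph.mem_edgeSet] at he
    obtain ⟨b, rfl⟩ := (Sym2.mem_iff_exists).1 he.2.2
    refine ⟨b, ?_, rfl⟩
    simp only [mem_filter, SimpleGraph.mem_neighborFinset]
    have := he.2.1
    rw [agree_mk, ha] at this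
    constructor
    · exact he.1
    · cases hb : x b <;> cases a <;> simp_all

lemma phi_split (x : V → Bool) (i : V) :
    Phi G x = (G.edgeFinset.filter (fun e => agreeFun x e = true ∧ i ∉ e)).card
      + nCount G x i (x i) := by
  rw [← card_agree_incident G x i (x i) rfl, Phi]
  rw [← Finset.filter_filter, ← Finset.filter_filter, add_comm]
  exact (Finset.card_filter_add_card_filter_not (fun e => i ∈ e)).symm

lemma nCount_update_self (x : V → Bool) (i : V) (a b : Bool) :
    nCount G (Function.update x i a) i b = nCount G x i b := by
  unfold nCount
  congr 1
  apply Finset.filter_congr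
  intro j hj
  rw [SimpleGraph.mem_neighborFinset] at hj
  rw [Function.update_of_ne hj.ne']

lemma phi_update (x : V → Bool) (i : V) (a : Bool) :
    Phi G (Function.update x i a) + nCount G x i (x i) = Phi G x + nCount G x i a := by
  rw [phi_split G (Function.update x i a) i, phi_split G x i]
  rw [Function.update_self, nCount_update_self]
  have : (G.edgeFinset.filter (fun e => agreeFun (Function.update x i a) e = true ∧ i ∉ e))
      = (G.edgeFinset.filter (fun e => agreeFun x e = true ∧ i ∉ e)) := by
    apply Finset.filter_congr
    intro e _
    constructor
    · rintro ⟨h1, h2⟩; rw [agree_update_notMem x i a e h2] at h1; exact ⟨h1, h2⟩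
    · rintro ⟨h1, h2⟩; rw [agree_update_notMem x i a e h2]; exact ⟨h1, h2⟩
  rw [this]; ring

lemma nCount_update_true_false_le (z : V → Bool) (i j : V) :
    nCount G (Function.update z i true) j false ≤ nCount G z j false := by
  apply Finset.card_le_card
  intro k hk
  simp only [mem_filter] at hk ⊢
  refine ⟨hk.1, ?_⟩
  rcases eq_or_ne k i with rfl | h
  · simp at hk
  · rw [Function.update_of_ne h] at hk; exact hk.2

lemma nCount_le_update_true_true (z : V → Bool) (i j : V) :
    nCount G z j true ≤ nCount G (Function.update z i true) j true := by
  apply Finset.card_le_card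
  intro k hk
  simp only [mem_filter] at hk ⊢
  refine ⟨hk.1, ?_⟩
  rcases eq_or_ne k i with rfl | h
  · simp
  · rw [Function.update_of_ne h]; exact hk.2

lemma inZ_step {y : V → Bool} (hy : InZ G y) {i : V} (hi : y i = true)
    (hc : nCount G y i false ≤ nCount G y i true) :
    InZ G (Function.update y i false) := by
  obtain ⟨m, ys, h0, hm, hstep⟩ := hy
  refine ⟨m + 1, fun k => if k ≤ m then ys k else Function.update y i false, ?_, ?_, ?_⟩
  · simp [h0]
  · simp
  · intro k hk
    rcases lt_or_eq_of_le (Nat.lt_succ_iff.mp hk) with hk' | rfl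
    · obtain ⟨j, hj1, hj2, hj3⟩ := hstep k hk'
      refine ⟨j, ?_, ?_, ?_⟩ <;>
        simp only [if_pos (le_of_lt hk'), if_pos (Nat.succ_le_of_lt hk')] <;>
        assumption
    · refine ⟨i, ?_, ?_, ?_⟩ <;>
        simp only [le_refl, if_pos, Nat.lt_irrefl, if_neg (Nat.not_succ_le_self k), hm] <;>
        assumption

lemma inZ_up_aux : ∀ m (ys : ℕ → V → Bool), ys 0 = (fun _ => true) →
    (∀ k < m, ∃ i, ys k i = true ∧ nCount G (ys k) i false ≤ nCount G (ys k) i true ∧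
      ys (k + 1) = Function.update (ys k) i false) →
    ∀ i, InZ G (Function.update (ys m) i true) := by
  intro m
  induction m with
  | zero =>
    intro ys h0 _ i
    rw [h0]
    have : Function.update (fun _ => true) i true = (fun (_ : V) => true) := by
      funext v; rcases eq_or_ne v i with rfl | h
      · simp
      · rw [Function.update_of_ne h]
    rw [this]
    exact ⟨0, fun _ => fun _ => true, rfl, rfl, by omega⟩
  | succ m ih =>
    intro ys h0 hstep i
    obtain ⟨j, hj1, hj2, hj3⟩ := hstep m (Nat.lt_succ_self m)
    have ihz : ∀ i, InZ G (Function.update (ys m) i true) :=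
      ih ys h0 (fun k hk => hstep k (Nat.lt_succ_of_lt hk))
    rcases eq_or_ne i j with rfl | hij
    · rw [hj3, Function.update_idem]
      exact ihz i
    · rw [hj3, Function.update_comm (Ne.symm hij)]
      apply inZ_step G (ihz i)
      · rwa [Function.update_of_ne (Ne.symm hij)]
      · calc nCount G (Function.update (ys m) i true) j false
            ≤ nCount G (ys m) j false := nCount_update_true_false_le G _ i j
          _ ≤ nCount G (ys m) j true := hj2
          _ ≤ nCount G (Function.update (ys m) i true) j true :=
              nCount_le_update_true_true G _ i j

lemma inZ_up {y : V → Bool} (hy : InZ G y) (i : V) : InZ G (Function.update y i true) := by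
  obtain ⟨m, ys, h0, hm, hstep⟩ := hy
  rw [← hm]
  exact inZ_up_aux G m ys h0 hstep i

lemma down_mono {m : ℕ} {ys : ℕ → V → Bool}
    (hstep : ∀ k < m, ∃ i, ys k i = true ∧ nCount G (ys k) i false ≤ nCount G (ys k) i true ∧
      ys (k + 1) = Function.update (ys k) i false)
    {v : V} {k : ℕ} (hkm : k ≤ m) (hv : ys k v = false) : ys m v = false := by
  obtain ⟨d, rfl⟩ := Nat.exists_eq_add_of_le hkm
  clear hkm
  induction d with
  | zero => exact hv
  | succ d ihd =>
    have hlt : k + d < k + (d + 1) := by omega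
    obtain ⟨j, _, _, hj3⟩ := hstep (k + d) (by omega)
    have : ys (k + d) v = false := by
      apply ihd; intro l hl; exact hstep l (by omega)
    rw [show k + (d+1) = (k+d)+1 by omega, hj3, Function.update_apply]
    split <;> simp [this]

theorem validControlSet_iff_flip_path' (C : Finset V) :
    ValidControlSet G C ↔
      ∃ T, ∃ ys : ℕ → V → Bool,
        ys 0 = (fun v => decide (v ∈ C)) ∧
        ys T = (fun _ => true) ∧
        (∀ k ≤ T, ∀ j ∈ C, ys k j = true) ∧
        (∀ k < T, ∃ i, i ∉ C ∧
          ((ys k i = false ∧ ys (k + 1) = Function.update (ys k) i true) ∨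
           (ys k i = true ∧ ys (k + 1) = Function.update (ys k) i false))) ∧
        (∀ k < T, Phi G (ys k) ≤ Phi G (ys (k + 1))) := by
  constructor
  · rintro ⟨m, xs, ⟨h0, hm, hstep⟩, hphi⟩
    refine ⟨m, xs, h0, hm, ?_, ?_, hphi⟩
    · intro k
      induction k with
      | zero => intro _ j hj; rw [h0]; simp [hj]
      | succ k ih =>
        intro hk j hj
        obtain ⟨i, hiC, _, hup⟩ := hstep k (by omega)
        have hne : j ≠ i := fun h => hiC (h ▸ hj)
        rw [hup, Function.update_of_ne hne]
        exact ih (by omega) j hj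
    · intro k hk
      obtain ⟨i, hiC, hf, hup⟩ := hstep k hk
      exact ⟨i, hiC, Or.inl ⟨hf, hup⟩⟩
  · rintro ⟨T, ys, h0, hT, _, hflip, hphi⟩
    have key : ∀ d ≤ T, InZ G (ys (T - d)) := by
      intro d
      induction d with
      | zero =>
        intro _
        refine ⟨0, fun _ => ys T, ?_, rfl, by omega⟩
        simp [hT]
      | succ d ih =>
        intro hd
        have hk : T - (d + 1) < T := by omega
        set k := T - (d + 1) with hkdef
        have hk1 : T - d = k + 1 := by omega
        have ihz : InZ G (ys (k + 1)) := by rw [← hk1]; exact ih (by omega)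
        obtain ⟨i, _, hcase⟩ := hflip k hk
        rcases hcase with ⟨hfalse, hup⟩ | ⟨htrue, hdown⟩
        · have heq : Function.update (ys (k + 1)) i false = ys k := by
            rw [hup, Function.update_idem, ← hfalse, Function.update_eq_self]
          rw [← heq]
          apply inZ_step G ihz
          · rw [hup]; simp
          · have hcnt : ∀ b, nCount G (ys (k + 1)) i b = nCount G (ys k) i b := by
              intro b; rw [hup, nCount_update_self]
            rw [hcnt, hcnt]
            have hpu := phi_update G (ys k) i true
            rw [hfalse] at hpu
            have := hphi k hk
            rw [hup] at this
            omega
        · have heq : Function.update (ys (k + 1)) i true = ys k := by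
            rw [hdown, Function.update_idem, ← htrue, Function.update_eq_self]
          rw [← heq]
          exact inZ_up G ihz i
    have h1C : InZ G (fun v => decide (v ∈ C)) := by
      rw [← h0]
      have := key T (le_refl T)
      rwa [Nat.sub_self] at this
    obtain ⟨m, zs, z0, zm, zstep⟩ := h1C
    refine ⟨m, fun k => zs (m - k), ⟨?_, ?_, ?_⟩, ?_⟩
    · simpa using zm
    · simpa [Nat.sub_self] using z0
    · intro k hk
      have ht : m - (k + 1) < m := by omega
      set t := m - (k + 1) with htdef
      have htk : m - k = t + 1 := by omega
      obtain ⟨j, hj1, hj2, hj3⟩ := zstep t ht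
      refine ⟨j, ?_, ?_, ?_⟩
      · have hf : zs (t + 1) j = false := by rw [hj3]; simp
        have := down_mono G zstep (show t + 1 ≤ m by omega) hf
        rw [zm] at this
        simpa using this
      · show zs (m - k) j = false
        rw [htk, hj3]; simp
      · show zs (m - (k + 1)) = Function.update (zs (m - k)) j true
        rw [htk, hj3, Function.update_idem, ← hj1, Function.update_eq_self]
    · intro k hk
      have ht : m - (k + 1) < m := by omega
      set t := m - (k + 1) with htdef
      have htk : m - k = t + 1 := by omega
      obtain ⟨j, hj1, hj2, hj3⟩ := zstep t ht
      show Phi G (zs (m - k)) ≤ Phi G (zs t)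
      rw [htk, hj3]
      have hpu := phi_update G (zs t) j false
      rw [hj1] at hpu
      omega

end Aux

/-- `C` is a `Φ_c`-valid control set iff there is a potential-nondecreasing
single-flip path from `1_C` to the all-ones configuration keeping `C` at `1`. -/
theorem validControlSet_iff_flip_path [Fintype V] [DecidableEq V]
    (G : SimpleGraph V) [DecidableRel G.Adj] (C : Finset V) :
    ValidControlSet G C ↔
      ∃ T, ∃ ys : ℕ → V → Bool,
        ys 0 = (fun v => decide (v ∈ C)) ∧
        ys T = (fun _ => true) ∧
        (∀ k ≤ T, ∀ j ∈ C, ys k j = true) ∧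
        (∀ k < T, ∃ i, i ∉ C ∧
          ((ys k i = false ∧ ys (k + 1) = Function.update (ys k) i true) ∨
           (ys k i = true ∧ ys (k + 1) = Function.update (ys k) i false))) ∧
        (∀ k < T, Phi G (ys k) ≤ Phi G (ys (k + 1))) :=
  validControlSet_iff_flip_path' G C
end

section
/- If G is a finite tree (a connected acyclic simple graph) with at least two vertices, then the set L of its leaves (vertices of degree 1) is a Φ_c-valid control set. -/
/-!
Root the tree at a vertex `r` and switch the internal vertices to `1` in order of decreasing
distance from `r`. When `v` is switched, every child of `v` (a neighbour farther from `r`; a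
non-leaf has at least one) is already `1`, while only its parent can still be `0`. Hence at least
as many edges at `v` start agreeing as stop agreeing, and `Φ_c` does not decrease.
-/

open Finset

variable {V : Type*}

section Potential

variable [Fintype V] [DecidableEq V] (G : SimpleGraph V) [DecidableRel G.Adj]

omit [Fintype V] [DecidableEq V] in
lemma agreeFun_mk (x : V → Bool) (a b : V) : agreeFun x s(a, b) = (x a == x b) := rfl

omit [Fintype V] in
lemma agreeFun_update_of_notMem {x : V → Bool} {i : V} {e : Sym2 V} (he : i ∉ e) (b : Bool) :
    agreeFun (Function.update x i b) e = agreeFun x e := by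
  induction e using Sym2.ind with
  | _ u w =>
    rw [Sym2.mem_iff, not_or] at he
    simp only [agreeFun_mk, Function.update_of_ne (Ne.symm he.1),
      Function.update_of_ne (Ne.symm he.2)]

lemma card_filter_mem_agreeFun (x : V → Bool) (i : V) :
    #{e ∈ G.edgeFinset | i ∈ e ∧ agreeFun x e = true} = nCount G x i (x i) := by
  symm
  refine Finset.card_bij (fun j _ => s(i, j)) ?_ (fun _ _ _ _ => Sym2.congr_right.mp) ?_
  · intro j hj
    simp only [Finset.mem_filter, SimpleGraph.mem_neighborFinset] at hj
    simp [hj.1, agreeFun_mk, hj.2]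
  · intro e he
    induction e using Sym2.ind with
    | _ u w =>
      simp only [Finset.mem_filter, SimpleGraph.mem_edgeFinset, SimpleGraph.mem_edgeSet,
        Sym2.mem_iff, agreeFun_mk, beq_iff_eq] at he
      obtain ⟨hadj, rfl | rfl, hag⟩ := he
      · exact ⟨w, by simp [hadj, hag], rfl⟩
      · exact ⟨u, by simp [hadj.symm, hag], Sym2.eq_swap⟩

lemma Phi_eq_add_nCount (x : V → Bool) (i : V) :
    Phi G x = #{e ∈ G.edgeFinset | i ∉ e ∧ agreeFun x e = true} + nCount G x i (x i) := by
  rw [← card_filter_mem_agreeFun, Phi, add_comm,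
    ← Finset.card_filter_add_card_filter_not (p := fun e => i ∈ e), Finset.filter_filter,
    Finset.filter_filter]
  congr 2 <;> ext e <;> simp only [Finset.mem_filter] <;> tauto

/-- Only the edges at `i` change: its agreeing neighbours are traded for those playing `b`. -/
lemma Phi_update_add (x : V → Bool) (i : V) (b : Bool) :
    Phi G (Function.update x i b) + nCount G x i (x i) = Phi G x + nCount G x i b := by
  have hrest : {e ∈ G.edgeFinset | i ∉ e ∧ agreeFun (Function.update x i b) e = true}
      = {e ∈ G.edgeFinset | i ∉ e ∧ agreeFun x e = true} :=
    Finset.filter_congr fun e _ => and_congr_right fun he => by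
      rw [agreeFun_update_of_notMem he]
  rw [Phi_eq_add_nCount G _ i, Phi_eq_add_nCount G x i, hrest, Function.update_self,
    nCount_update_self]
  ring

lemma Phi_le_Phi_update_true {x : V → Bool} {i : V} (hxi : x i = false)
    (hcount : nCount G x i false ≤ nCount G x i true) :
    Phi G x ≤ Phi G (Function.update x i true) := by
  have := Phi_update_add G x i true
  rw [hxi] at this
  omega

end Potential

section Ascent

variable [DecidableEq V]

lemma update_decide_notMem (T : Finset V) (i : V) :
    Function.update (fun v => decide (v ∉ T)) i true = fun v => decide (v ∉ T.erase i) := by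
  funext v
  by_cases hv : v = i
  · subst hv; simp
  · simp [hv]

theorem exists_monotone_ascent {α : Type*} [LE α] (f : (V → Bool) → α) (S : Finset V)
    (h : ∀ T ⊆ S, T.Nonempty → ∃ i ∈ T,
      f (fun v => decide (v ∉ T)) ≤ f (Function.update (fun v => decide (v ∉ T)) i true)) :
    ∃ (m : ℕ) (xs : ℕ → V → Bool), xs 0 = (fun v => decide (v ∉ S)) ∧ xs m = (fun _ => true) ∧
      ∀ k < m, ∃ i ∈ S, xs k i = false ∧ xs (k + 1) = Function.update (xs k) i true ∧
        f (xs k) ≤ f (xs (k + 1)) := by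
  induction S using Finset.strongInduction with
  | H S ih =>
    rcases S.eq_empty_or_nonempty with rfl | hne
    · exact ⟨0, fun _ _ => true, by simp, rfl, by simp⟩
    obtain ⟨i, hi, hfi⟩ := h S subset_rfl hne
    obtain ⟨m, xs, hstart, hend, hstep⟩ := ih (S.erase i) (S.erase_ssubset hi)
      fun T hT => h T (hT.trans (S.erase_subset i))
    have hflip : xs 0 = Function.update (fun v => decide (v ∉ S)) i true := by
      rw [hstart, update_decide_notMem]
    refine ⟨m + 1, fun k => if k = 0 then fun v => decide (v ∉ S) else xs (k - 1),
      rfl, by simpa using hend, fun k hk => ?_⟩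
    rcases k with _ | k
    · exact ⟨i, hi, by simpa using hi, hflip, by simpa [hflip] using hfi⟩
    · obtain ⟨j, hj, hstepj⟩ := hstep k (by omega)
      exact ⟨j, S.mem_of_mem_erase hj, by simpa using hstepj⟩

end Ascent

theorem validControlSet_of_forall_exists_flip [Fintype V] [DecidableEq V] (G : SimpleGraph V)
    [DecidableRel G.Adj] (C : Finset V)
    (h : ∀ T ⊆ Cᶜ, T.Nonempty → ∃ i ∈ T,
      Phi G (fun v => decide (v ∉ T)) ≤ Phi G (Function.update (fun v => decide (v ∉ T)) i true)) :
    ValidControlSet G C := by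
  obtain ⟨m, xs, hstart, hend, hstep⟩ := exists_monotone_ascent (Phi G) Cᶜ h
  refine ⟨m, xs, ⟨by simpa using hstart, hend, fun k hk => ?_⟩, fun k hk => ?_⟩
  · obtain ⟨i, hi, hfalse, hnext, -⟩ := hstep k hk
    exact ⟨i, Finset.mem_compl.mp hi, hfalse, hnext⟩
  · obtain ⟨-, -, -, -, hle⟩ := hstep k hk
    exact hle

namespace SimpleGraph.IsTree

variable {G : SimpleGraph V} (hG : G.IsTree) (r : V)
include hG

theorem eq_of_adj_of_dist_lt {v u₁ u₂ : V} (h₁ : G.Adj u₁ v) (h₂ : G.Adj u₂ v)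
    (hd₁ : G.dist r u₁ < G.dist r v) (hd₂ : G.dist r u₂ < G.dist r v) : u₁ = u₂ := by
  obtain ⟨p₁, hp₁⟩ := hG.connected.exists_walk_length_eq_dist r u₁
  obtain ⟨p₂, hp₂⟩ := hG.connected.exists_walk_length_eq_dist r u₂
  have hpath₁ : (p₁.concat h₁).IsPath := (p₁.concat h₁).isPath_of_length_eq_dist <| by
    have := hG.dist_eq_dist_add_one_of_adj r h₁
    rw [Walk.length_concat]; omega
  have hpath₂ : (p₂.concat h₂).IsPath := (p₂.concat h₂).isPath_of_length_eq_dist <| by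
    have := hG.dist_eq_dist_add_one_of_adj r h₂
    rw [Walk.length_concat]; omega
  have hsame : p₁.concat h₁ = p₂.concat h₂ :=
    congrArg Subtype.val <| (hG.isAcyclic.subsingleton_path r v).elim ⟨_, hpath₁⟩ ⟨_, hpath₂⟩
  simpa using congrArg Walk.penultimate hsame

theorem exists_adj_dist_lt [Fintype V] [DecidableRel G.Adj] {v : V} (hv : 2 ≤ G.degree v) :
    ∃ u, G.Adj v u ∧ G.dist r v < G.dist r u := by
  by_contra! hfar
  have hnear : G.neighborFinset v ⊆ {u ∈ G.neighborFinset v | G.dist r u < G.dist r v} :=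
    fun u hu => by
      rw [mem_neighborFinset] at hu
      have := hG.dist_ne_of_adj r hu
      have := hfar u hu
      simp only [Finset.mem_filter, mem_neighborFinset]
      exact ⟨hu, by omega⟩
  have hle : #{u ∈ G.neighborFinset v | G.dist r u < G.dist r v} ≤ 1 :=
    Finset.card_le_one.mpr fun a ha b hb => by
      simp only [Finset.mem_filter, mem_neighborFinset] at ha hb
      exact hG.eq_of_adj_of_dist_lt r ha.1.symm hb.1.symm ha.2 hb.2
  have := Finset.card_le_card hnear
  rw [card_neighborFinset_eq_degree] at this
  omega

/-- If `i` is at least as far from `r` as every vertex of `T`, its only possible neighbour in `T`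
is its parent, while a child of `i` exists and lies outside `T`. -/
theorem nCount_false_le_nCount_true [Fintype V] [DecidableEq V] [DecidableRel G.Adj]
    {T : Finset V} {i : V} (hi : 2 ≤ G.degree i) (hmax : ∀ j ∈ T, G.dist r j ≤ G.dist r i) :
    nCount G (fun v => decide (v ∉ T)) i false ≤ nCount G (fun v => decide (v ∉ T)) i true := by
  obtain ⟨u, hu, hdu⟩ := hG.exists_adj_dist_lt r hi
  calc nCount G (fun v => decide (v ∉ T)) i false ≤ 1 :=
        Finset.card_le_one.mpr fun a ha b hb => by
          simp only [Finset.mem_filter, mem_neighborFinset, decide_eq_false_iff_not,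
            not_not] at ha hb
          have := hG.dist_ne_of_adj r ha.1
          have := hG.dist_ne_of_adj r hb.1
          have := hmax a ha.2
          have := hmax b hb.2
          exact hG.eq_of_adj_of_dist_lt r ha.1.symm hb.1.symm (by omega) (by omega)
    _ ≤ nCount G (fun v => decide (v ∉ T)) i true :=
        Finset.card_pos.mpr ⟨u, by
          simp only [Finset.mem_filter, mem_neighborFinset, decide_eq_true_eq]
          exact ⟨hu, fun huT => absurd (hmax u huT) (by omega)⟩⟩

end SimpleGraph.IsTree

/-- in a finite tree with at least two vertices, the set of leaves is a
`Φ_c`-valid control set. -/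
theorem tree_leaves_valid [Fintype V] [DecidableEq V]
    (G : SimpleGraph V) [DecidableRel G.Adj]
    (hconn : G.Connected) (hacyc : G.IsAcyclic) (hn : 2 ≤ Fintype.card V) :
    ValidControlSet G (Finset.univ.filter (fun v => G.degree v = 1)) := by
  have hG : G.IsTree := ⟨hconn, hacyc⟩
  have : Nontrivial V := Fintype.one_lt_card_iff_nontrivial.mp hn
  obtain ⟨r⟩ := hconn.nonempty
  refine validControlSet_of_forall_exists_flip G _ fun T hT hne => ?_
  obtain ⟨i, hi, hmax⟩ := T.exists_max_image (G.dist r) hne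
  have hdeg : 2 ≤ G.degree i := by
    have hleaf : G.degree i ≠ 1 := by simpa using hT hi
    have := hconn.preconnected.degree_pos_of_nontrivial i
    omega
  exact ⟨i, hi, Phi_le_Phi_update_true G (by simpa using hi)
    (hG.nCount_false_le_nCount_true r hdeg hmax)⟩
end
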